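/- arXiv:1005.3984 — 3 statements merged into one kernel-verified Lean document; each statement's English description precedes it below -/
import Mathlib

section
/- If x_a and x_b are two solutions of the same linear time-varying system x' t = A t *ᵥ x t + b t on [0, r] whose outputs agree, in the sense that (C t)ᵀ *ᵥ x_a t = (C t)ᵀ *ᵥ x_b t for all t ∈ [0, r], then (q t)ᵀ *ᵥ (x_a 0 - x_b 0) = 0 for all t ∈ [0, r]. (Key step in the proof of implication (b) ⇒ (a) of Proposition 2.3: indistinguishable initial states lie in the common kernel of the matrices (q t)ᵀ.) -/
open MeasureTheory intervalIntegral Matrix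

attribute [local instance] Matrix.normedAddCommGroup Matrix.normedSpace

/-!
The difference `y = x_a - x_b` solves the homogeneous system `y' = A y` with `y 0 = x_a 0 - x_b 0`,
and so does `t ↦ Φ t *ᵥ (x_a 0 - x_b 0)`; by uniqueness of solutions of linear ODEs with continuous
coefficients the two agree on `[0, r]`. Hence
`(q t)ᵀ *ᵥ (x_a 0 - x_b 0) = ∫₀ᵗ (C s)ᵀ *ᵥ (Φ s *ᵥ (x_a 0 - x_b 0)) ds = ∫₀ᵗ (C s)ᵀ *ᵥ y s ds`,
and the integrand vanishes because the outputs agree.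
-/

open Set Topology

theorem eqOn_Icc_of_hasDerivWithinAt_clm_apply {E : Type*} [NormedAddCommGroup E]
    [NormedSpace ℝ E] {A : ℝ → E →L[ℝ] E} {a b : ℝ} (hA : ContinuousOn A (Icc a b))
    {f g : ℝ → E} (hf : ∀ t ∈ Icc a b, HasDerivWithinAt f (A t (f t)) (Icc a b) t)
    (hg : ∀ t ∈ Icc a b, HasDerivWithinAt g (A t (g t)) (Icc a b) t) (ha : f a = g a) :
    EqOn f g (Icc a b) := by
  obtain ⟨K, hK⟩ := isCompact_Icc.exists_bound_of_continuousOn hA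
  have hlip : ∀ t ∈ Ico a b, LipschitzOnWith K.toNNReal (A t) univ := fun t ht =>
    ((A t).lipschitz.weaken
      (NNReal.le_toNNReal_of_coe_le (hK t (Ico_subset_Icc_self ht)))).lipschitzOnWith
  have hGE : ∀ t ∈ Ico a b, Icc a b ∈ 𝓝[≥] t := fun t ht => Icc_mem_nhdsGE_of_mem ht
  exact ODE_solution_unique_of_mem_Icc_right hlip
    (fun t ht => (hf t ht).continuousWithinAt)
    (fun t ht => (hf t (Ico_subset_Icc_self ht)).mono_of_mem_nhdsWithin (hGE t ht))
    (fun _ _ => mem_univ _)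
    (fun t ht => (hg t ht).continuousWithinAt)
    (fun t ht => (hg t (Ico_subset_Icc_self ht)).mono_of_mem_nhdsWithin (hGE t ht))
    (fun _ _ => mem_univ _) ha

section Matrix

variable {m n : Type*} [Fintype m] [Fintype n]

theorem eqOn_Icc_of_hasDerivWithinAt_mulVec {A : ℝ → Matrix n n ℝ} {a b : ℝ}
    (hA : ContinuousOn A (Icc a b)) {f g : ℝ → n → ℝ}
    (hf : ∀ t ∈ Icc a b, HasDerivWithinAt f (A t *ᵥ f t) (Icc a b) t)
    (hg : ∀ t ∈ Icc a b, HasDerivWithinAt g (A t *ᵥ g t) (Icc a b) t) (ha : f a = g a) :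
    EqOn f g (Icc a b) :=
  let toCLM : Matrix n n ℝ →ₗ[ℝ] (n → ℝ) →L[ℝ] (n → ℝ) :=
    LinearMap.toContinuousLinearMap.toLinearMap ∘ₗ mulVecBilin ℝ ℝ
  eqOn_Icc_of_hasDerivWithinAt_clm_apply
    (toCLM.continuous_of_finiteDimensional.comp_continuousOn hA) hf hg ha

theorem HasDerivWithinAt.matrix_mulVec_const {Φ : ℝ → Matrix m n ℝ} {Φ' : Matrix m n ℝ}
    {s : Set ℝ} {t : ℝ} (h : HasDerivWithinAt Φ Φ' s t) (c : n → ℝ) :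
    HasDerivWithinAt (fun t => Φ t *ᵥ c) (Φ' *ᵥ c) s t :=
  let L : Matrix m n ℝ →ₗ[ℝ] (m → ℝ) := (mulVecBilin ℝ ℝ).flip c
  L.toContinuousLinearMap.hasFDerivAt.comp_hasDerivWithinAt t h

theorem intervalIntegral.transpose_integral_mulVec {f : ℝ → Matrix m n ℝ} {a b : ℝ}
    (hf : ContinuousOn f (uIcc a b)) (c : m → ℝ) :
    (∫ s in a..b, f s)ᵀ *ᵥ c = ∫ s in a..b, (f s)ᵀ *ᵥ c :=
  let L : Matrix m n ℝ →ₗ[ℝ] (n → ℝ) :=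
    (mulVecBilin ℝ ℝ).flip c ∘ₗ (transposeLinearEquiv m n ℝ ℝ).toLinearMap
  (L.toContinuousLinearMap.intervalIntegral_comp_comm hf.intervalIntegrable).symm

end Matrix

theorem stmt_8_general (n k : ℕ) (r : ℝ)
    (A : ℝ → Matrix (Fin n) (Fin n) ℝ) (b : ℝ → (Fin n → ℝ))
    (C : ℝ → Matrix (Fin n) (Fin k) ℝ)
    (hA : ContinuousOn A (Set.Icc 0 r))
    (hC : ContinuousOn C (Set.Icc 0 r))
    (xa xb : ℝ → (Fin n → ℝ))
    (hxa : ∀ t ∈ Set.Icc (0:ℝ) r,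
      HasDerivWithinAt xa (A t *ᵥ xa t + b t) (Set.Icc 0 r) t)
    (hxb : ∀ t ∈ Set.Icc (0:ℝ) r,
      HasDerivWithinAt xb (A t *ᵥ xb t + b t) (Set.Icc 0 r) t)
    (Φ : ℝ → Matrix (Fin n) (Fin n) ℝ)
    (hΦ : ∀ t ∈ Set.Icc (0:ℝ) r, HasDerivWithinAt Φ (A t * Φ t) (Set.Icc 0 r) t)
    (hΦ0 : Φ 0 = 1)
    (q : ℝ → Matrix (Fin n) (Fin k) ℝ)
    (hqdef : ∀ t, q t = ∫ s in (0:ℝ)..t, (Φ s)ᵀ * C s)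
    (hout : ∀ t ∈ Set.Icc (0:ℝ) r, (C t)ᵀ *ᵥ xa t = (C t)ᵀ *ᵥ xb t) :
    ∀ t ∈ Set.Icc (0:ℝ) r, (q t)ᵀ *ᵥ (xa 0 - xb 0) = 0 := by
  intro t ht
  set c := xa 0 - xb 0
  have hsol : EqOn (xa - xb) (fun s => Φ s *ᵥ c) (Icc 0 r) := by
    refine eqOn_Icc_of_hasDerivWithinAt_mulVec hA (fun s hs => ?_) (fun s hs => ?_)
      (by simp [hΦ0, c])
    · exact ((hxa s hs).sub (hxb s hs)).congr_deriv (by simp [mulVec_sub])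
    · simpa [mulVec_mulVec] using (hΦ s hs).matrix_mulVec_const c
  have hsub : uIcc 0 t ⊆ Icc 0 r := by
    rw [uIcc_of_le ht.1]
    exact Icc_subset_Icc_right ht.2
  have hΦc : ContinuousOn Φ (Icc 0 r) := fun s hs => (hΦ s hs).continuousWithinAt
  have hcont : ContinuousOn (fun s => (Φ s)ᵀ * C s) (uIcc 0 t) :=
    ((continuous_fst.matrix_transpose).matrix_mul continuous_snd).comp_continuousOn
      ((hΦc.mono hsub).prodMk (hC.mono hsub))
  rw [hqdef, intervalIntegral.transpose_integral_mulVec hcont]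
  refine (integral_congr fun s hs => ?_).trans integral_zero
  rw [transpose_mul, transpose_transpose, ← mulVec_mulVec,
    show Φ s *ᵥ c = xa s - xb s from (hsol (hsub hs)).symm, mulVec_sub, hout s (hsub hs),
    sub_self]

/-- Key step in the proof of implication (b) ⇒ (a) of Proposition 2.3: if two
solutions of `x' = A x + b` on `[0, r]` have the same output through `(C t)ᵀ`,
then their initial difference lies in the common kernel of the matrices
`(q t)ᵀ`, i.e. `(q t)ᵀ *ᵥ (x_a 0 - x_b 0) = 0` for all `t ∈ [0, r]`. -/
theorem stmt_8 (n k : ℕ) (hn : 1 ≤ n) (hk : 1 ≤ k) (r : ℝ) (hr : 0 < r)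
    (A : ℝ → Matrix (Fin n) (Fin n) ℝ) (b : ℝ → (Fin n → ℝ))
    (C : ℝ → Matrix (Fin n) (Fin k) ℝ)
    (hA : ContinuousOn A (Set.Icc 0 r)) (hb : ContinuousOn b (Set.Icc 0 r))
    (hC : ContinuousOn C (Set.Icc 0 r))
    (xa xb : ℝ → (Fin n → ℝ))
    (hxa : ∀ t ∈ Set.Icc (0:ℝ) r,
      HasDerivWithinAt xa (A t *ᵥ xa t + b t) (Set.Icc 0 r) t)
    (hxb : ∀ t ∈ Set.Icc (0:ℝ) r,
      HasDerivWithinAt xb (A t *ᵥ xb t + b t) (Set.Icc 0 r) t)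
    (Φ : ℝ → Matrix (Fin n) (Fin n) ℝ)
    (hΦ : ∀ t ∈ Set.Icc (0:ℝ) r, HasDerivWithinAt Φ (A t * Φ t) (Set.Icc 0 r) t)
    (hΦ0 : Φ 0 = 1)
    (q : ℝ → Matrix (Fin n) (Fin k) ℝ)
    (hqdef : ∀ t, q t = ∫ s in (0:ℝ)..t, (Φ s)ᵀ * C s)
    (hout : ∀ t ∈ Set.Icc (0:ℝ) r, (C t)ᵀ *ᵥ xa t = (C t)ᵀ *ᵥ xb t) :
    ∀ t ∈ Set.Icc (0:ℝ) r, (q t)ᵀ *ᵥ (xa 0 - xb 0) = 0 :=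
  stmt_8_general n k r A b C hA hC xa xb hxa hxb Φ hΦ hΦ0 q hqdef hout
end

section
/- If there exists ξ ∈ ℝⁿ with ξ ≠ 0 such that q t ⬝ᵥ ξ = 0 for all t ∈ [0, r], then for every choice of times t₀, t₁, …, t_{n-1} ∈ [0, r], the determinant of the n × n matrix whose i-th row is the vector (Φ tᵢ)ᵀ *ᵥ C tᵢ equals zero. (Equation (2.14) of Remark 2.4.) -/
/-! By the fundamental theorem of calculus, `q` has derivative `(Φ t)ᵀ *ᵥ C t` within `[0, r]`;
differentiating `q t ⬝ᵥ ξ = 0` therefore makes `ξ` orthogonal to every row, so `ξ` is a nonzero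
kernel vector of the matrix. -/

open MeasureTheory intervalIntegral Matrix

attribute [local instance] Matrix.normedAddCommGroup Matrix.normedSpace

theorem ContinuousOn.hasDerivWithinAt_integral_Icc {E : Type*} [NormedAddCommGroup E]
    [NormedSpace ℝ E] [CompleteSpace E] {f : ℝ → E} {a b t : ℝ}
    (hf : ContinuousOn f (Set.Icc a b)) (ht : t ∈ Set.Icc a b) :
    HasDerivWithinAt (fun u => ∫ x in a..u, f x) (f t) (Set.Icc a b) t := by
  have : Fact (t ∈ Set.Icc a b) := ⟨ht⟩
  refine integral_hasDerivWithinAt_right ?_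
    (hf.stronglyMeasurableAtFilter_nhdsWithin measurableSet_Icc t) (hf t ht)
  exact (hf.mono (Set.Icc_subset_Icc le_rfl ht.2)).intervalIntegrable_of_Icc ht.1

theorem HasDerivWithinAt.eq_zero_of_eqOn_zero {𝕜 F : Type*} [NontriviallyNormedField 𝕜]
    [NormedAddCommGroup F] [NormedSpace 𝕜 F] {f : 𝕜 → F} {f' : F} {s : Set 𝕜} {t : 𝕜}
    (hf : HasDerivWithinAt f f' s t) (hs : UniqueDiffWithinAt 𝕜 s t) (ht : t ∈ s)
    (h0 : Set.EqOn f 0 s) : f' = 0 :=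
  hs.eq_deriv _ hf ((hasDerivWithinAt_const t s 0).congr h0 (h0 ht))

theorem HasDerivWithinAt.dotProduct_const {𝕜 ι : Type*} [NontriviallyNormedField 𝕜]
    [Fintype ι] {f : 𝕜 → ι → 𝕜} {f' : ι → 𝕜} {s : Set 𝕜} {t : 𝕜}
    (hf : HasDerivWithinAt f f' s t) (v : ι → 𝕜) :
    HasDerivWithinAt (fun u => f u ⬝ᵥ v) (f' ⬝ᵥ v) s t := by
  simp only [dotProduct]
  exact HasDerivWithinAt.fun_sum fun i _ => (hasDerivWithinAt_pi.1 hf i).mul_const (v i)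

theorem Matrix.det_eq_zero_of_forall_dotProduct_eq_zero {ι K : Type*} [Fintype ι]
    [DecidableEq ι] [Field K] (M : Matrix ι ι K) {v : ι → K} (hv : v ≠ 0)
    (hMv : ∀ i, M i ⬝ᵥ v = 0) : M.det = 0 :=
  exists_mulVec_eq_zero_iff.mp ⟨v, hv, funext hMv⟩

theorem stmt_10_general (n : ℕ) (r : ℝ) (hr : 0 < r)
    (A : ℝ → Matrix (Fin n) (Fin n) ℝ) (C : ℝ → (Fin n → ℝ))
    (hC : ContinuousOn C (Set.Icc 0 r))
    (Φ : ℝ → Matrix (Fin n) (Fin n) ℝ)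
    (hΦ : ∀ t ∈ Set.Icc (0:ℝ) r, HasDerivWithinAt Φ (A t * Φ t) (Set.Icc 0 r) t)
    (q : ℝ → (Fin n → ℝ))
    (hqdef : ∀ t, q t = ∫ s in (0:ℝ)..t, (Φ s)ᵀ *ᵥ C s)
    (ξ : Fin n → ℝ) (hξ : ξ ≠ 0)
    (hker : ∀ t ∈ Set.Icc (0:ℝ) r, q t ⬝ᵥ ξ = 0) :
    ∀ ts : Fin n → ℝ, (∀ i, ts i ∈ Set.Icc (0:ℝ) r) →
      (Matrix.of fun i j => ((Φ (ts i))ᵀ *ᵥ C (ts i)) j).det = 0 := by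
  intro ts hts
  have hF : ContinuousOn (fun s => (Φ s)ᵀ *ᵥ C s) (Set.Icc 0 r) :=
    (continuous_fst.matrix_transpose.matrix_mulVec continuous_snd).comp_continuousOn
      ((HasDerivWithinAt.continuousOn hΦ).prodMk hC)
  have hq : ∀ t ∈ Set.Icc (0:ℝ) r, HasDerivWithinAt q ((Φ t)ᵀ *ᵥ C t) (Set.Icc 0 r) t := by
    intro t ht
    rw [funext hqdef]
    exact hF.hasDerivWithinAt_integral_Icc ht
  have hFξ : ∀ t ∈ Set.Icc (0:ℝ) r, (Φ t)ᵀ *ᵥ C t ⬝ᵥ ξ = 0 := fun t ht =>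
    ((hq t ht).dotProduct_const ξ).eq_zero_of_eqOn_zero (uniqueDiffOn_Icc hr t ht) ht hker
  exact det_eq_zero_of_forall_dotProduct_eq_zero _ hξ fun i => hFξ (ts i) (hts i)

/-- Equation (2.14) of Remark 2.4 (single-output case `k = 1`): if there is a
nonzero `ξ` with `q t ⬝ᵥ ξ = 0` for all `t ∈ [0, r]`, then for every choice of
times `ts 0, …, ts (n-1) ∈ [0, r]` the determinant of the `n × n` matrix whose
`i`-th row is the vector `(Φ (ts i))ᵀ *ᵥ C (ts i)` vanishes. -/
theorem stmt_10 (n : ℕ) (hn : 1 ≤ n) (r : ℝ) (hr : 0 < r)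
    (A : ℝ → Matrix (Fin n) (Fin n) ℝ) (C : ℝ → (Fin n → ℝ))
    (hA : ContinuousOn A (Set.Icc 0 r)) (hC : ContinuousOn C (Set.Icc 0 r))
    (Φ : ℝ → Matrix (Fin n) (Fin n) ℝ)
    (hΦ : ∀ t ∈ Set.Icc (0:ℝ) r, HasDerivWithinAt Φ (A t * Φ t) (Set.Icc 0 r) t)
    (hΦ0 : Φ 0 = 1)
    (q : ℝ → (Fin n → ℝ))
    (hqdef : ∀ t, q t = ∫ s in (0:ℝ)..t, (Φ s)ᵀ *ᵥ C s)
    (ξ : Fin n → ℝ) (hξ : ξ ≠ 0)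
    (hker : ∀ t ∈ Set.Icc (0:ℝ) r, q t ⬝ᵥ ξ = 0) :
    ∀ ts : Fin n → ℝ, (∀ i, ts i ∈ Set.Icc (0:ℝ) r) →
      (Matrix.of fun i j => ((Φ (ts i))ᵀ *ᵥ C (ts i)) j).det = 0 :=
  stmt_10_general n r hr A C hC Φ hΦ q hqdef ξ hξ hker
end

section
/- If the matrix Q := ∫ t in (0:ℝ)..r, q t * (q t)ᵀ is positive definite, then the state at time r is recovered exactly from the output history and the input data by the observer operator P: x r = Φ r *ᵥ (Q⁻¹ *ᵥ ∫ t in (0:ℝ)..r, q t *ᵥ p t) + θ r. (Dead-beat reconstruction formula (2.23)–(2.24), the core of Corollaries 2.9 and 2.11: the hybrid observer output equals the true state after time r.) -/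
/-! By uniqueness for the linear equation `z' = A z`, the difference `x - θ` equals
`t ↦ Φ t *ᵥ x 0`. Substituting this into the output equation and integrating shows
`p t = (q t)ᵀ *ᵥ x 0`, so `∫ q p = Q *ᵥ x 0`; inverting `Q` recovers `x 0`, and then
`x r = Φ r *ᵥ x 0 + θ r`. -/

open MeasureTheory intervalIntegral Matrix Set

attribute [local instance] Matrix.normedAddCommGroup Matrix.normedSpace

section

variable {E : Type*} [NormedAddCommGroup E] [NormedSpace ℝ E]

theorem linear_ODE_solution_unique_of_mem_Icc {A : ℝ → E →L[ℝ] E} {a b : ℝ}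
    (hA : ContinuousOn A (Icc a b)) {u v : ℝ → E}
    (hu : ∀ t ∈ Icc a b, HasDerivWithinAt u (A t (u t)) (Icc a b) t)
    (hv : ∀ t ∈ Icc a b, HasDerivWithinAt v (A t (v t)) (Icc a b) t) (ha : u a = v a) :
    EqOn u v (Icc a b) := by
  obtain ⟨K, hK⟩ := isCompact_Icc.exists_bound_of_continuousOn hA
  have hlip : ∀ t ∈ Ico a b, LipschitzOnWith K.toNNReal (A t) univ := fun t ht =>
    ((A t).lipschitz.weaken (by
      rw [← NNReal.coe_le_coe, coe_nnnorm]
      exact (hK t (Ico_subset_Icc_self ht)).trans (le_max_left _ _))).lipschitzOnWith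
  have hright : ∀ w : ℝ → E, (∀ t ∈ Icc a b, HasDerivWithinAt w (A t (w t)) (Icc a b) t) →
      ∀ t ∈ Ico a b, HasDerivWithinAt w (A t (w t)) (Ici t) t := fun w hw t ht =>
    (hw t (Ico_subset_Icc_self ht)).mono_of_mem_nhdsWithin (Icc_mem_nhdsGE_of_mem ht)
  exact ODE_solution_unique_of_mem_Icc_right hlip (HasDerivWithinAt.continuousOn hu)
    (hright u hu) (fun _ _ => mem_univ _) (HasDerivWithinAt.continuousOn hv) (hright v hv)
    (fun _ _ => mem_univ _) ha

theorem integral_eq_sub_of_hasDerivWithinAt_Icc [CompleteSpace E] {f f' : ℝ → E} {a b : ℝ}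
    (hab : a ≤ b) (hf : ∀ t ∈ Icc a b, HasDerivWithinAt f (f' t) (Icc a b) t)
    (hf' : IntervalIntegrable f' volume a b) :
    ∫ t in a..b, f' t = f b - f a :=
  integral_eq_sub_of_hasDeriv_right_of_le hab (HasDerivWithinAt.continuousOn hf)
    (fun t ht => (hf t (Ioo_subset_Icc_self ht)).mono_of_mem_nhdsWithin
      (Icc_mem_nhdsGT_of_mem (Ioo_subset_Ico_self ht))) hf'

end

namespace Matrix

variable {m n : Type*} [Fintype m] [Fintype n]

noncomputable def mulVecCLM (v : n → ℝ) : Matrix m n ℝ →L[ℝ] m → ℝ :=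
  LinearMap.toContinuousLinearMap
    { toFun := (· *ᵥ v)
      map_add' := fun M N => add_mulVec M N v
      map_smul' := fun c M => smul_mulVec c M v }

noncomputable def vecMulCLM (v : m → ℝ) : Matrix m n ℝ →L[ℝ] n → ℝ :=
  LinearMap.toContinuousLinearMap
    { toFun := (v ᵥ* ·)
      map_add' := fun M N => vecMul_add M N v
      map_smul' := fun c M => vecMul_smul v c M }

theorem _root_.HasDerivWithinAt.matrix_mulVec_const_s19 {M : ℝ → Matrix m n ℝ} {M' : Matrix m n ℝ}
    {s : Set ℝ} {t : ℝ} (h : HasDerivWithinAt M M' s t) (v : n → ℝ) :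
    HasDerivWithinAt (fun t => M t *ᵥ v) (M' *ᵥ v) s t :=
  ((mulVecCLM v).hasFDerivAt.comp_hasDerivWithinAt t h :)

theorem intervalIntegral_mulVec_const {M : ℝ → Matrix m n ℝ} {a b : ℝ}
    (hM : ContinuousOn M (uIcc a b)) (v : n → ℝ) :
    ∫ t in a..b, M t *ᵥ v = (∫ t in a..b, M t) *ᵥ v :=
  (mulVecCLM v).intervalIntegral_comp_comm hM.intervalIntegrable

theorem intervalIntegral_vecMul_const {M : ℝ → Matrix m n ℝ} {a b : ℝ}
    (hM : ContinuousOn M (uIcc a b)) (v : m → ℝ) :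
    ∫ t in a..b, v ᵥ* M t = v ᵥ* ∫ t in a..b, M t :=
  (vecMulCLM v).intervalIntegral_comp_comm hM.intervalIntegrable

theorem eqOn_mulVec_of_hasDerivWithinAt_fundamental [DecidableEq n] {A Φ : ℝ → Matrix n n ℝ}
    {z : ℝ → n → ℝ} {a b : ℝ} (hA : ContinuousOn A (Icc a b))
    (hΦ : ∀ t ∈ Icc a b, HasDerivWithinAt Φ (A t * Φ t) (Icc a b) t) (hΦa : Φ a = 1)
    (hz : ∀ t ∈ Icc a b, HasDerivWithinAt z (A t *ᵥ z t) (Icc a b) t) :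
    EqOn z (fun t => Φ t *ᵥ z a) (Icc a b) := by
  let L : Matrix n n ℝ →ₗ[ℝ] (n → ℝ) →L[ℝ] n → ℝ :=
    LinearMap.toContinuousLinearMap.toLinearMap ∘ₗ toLin'.toLinearMap
  refine linear_ODE_solution_unique_of_mem_Icc (A := fun t => L (A t))
    ((LinearMap.continuous_of_finiteDimensional L).comp_continuousOn hA) hz
    (fun t ht => ?_) (by simp [hΦa])
  simpa [L, mulVec_mulVec] using (hΦ t ht).matrix_mulVec_const_s19 (z a)

theorem output_increment_eq_transpose_mulVec {Φ : ℝ → Matrix m m ℝ} {D : ℝ → Matrix m n ℝ}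
    {f : ℝ → n → ℝ} {x θ : ℝ → m → ℝ} {y : ℝ → n → ℝ} {x₀ : m → ℝ} {a r t : ℝ}
    (hD : ContinuousOn D (Icc a r)) (hf : ContinuousOn f (Icc a r))
    (hΦ : ContinuousOn Φ (Icc a r)) (hθ : ContinuousOn θ (Icc a r))
    (hx : ∀ s ∈ Icc a r, x s = Φ s *ᵥ x₀ + θ s)
    (hy : ∀ s ∈ Icc a r, HasDerivWithinAt y (f s + (D s)ᵀ *ᵥ x s) (Icc a r) s)
    (ht : t ∈ Icc a r) :
    y t - y a - (∫ s in a..t, f s) - ∫ s in a..t, (D s)ᵀ *ᵥ θ s =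
      (∫ s in a..t, (Φ s)ᵀ * D s)ᵀ *ᵥ x₀ := by
  have hsub : Icc a t ⊆ Icc a r := Icc_subset_Icc_right ht.2
  have huIcc : uIcc a t ⊆ Icc a r := uIcc_of_le ht.1 ▸ hsub
  have hxc : ContinuousOn x (Icc a r) := ContinuousOn.congr (by fun_prop) hx
  have hint : ∀ g : ℝ → n → ℝ, ContinuousOn g (Icc a r) → IntervalIntegrable g volume a t :=
    fun g hg => (hg.mono huIcc).intervalIntegrable
  have hftc : ∫ s in a..t, (f s + (D s)ᵀ *ᵥ x s) = y t - y a :=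
    integral_eq_sub_of_hasDerivWithinAt_Icc ht.1 (fun s hs => (hy s (hsub hs)).mono hsub)
      (hint _ (by fun_prop))
  rw [← hftc, integral_add (hint _ hf) (hint _ (by fun_prop)), add_sub_cancel_left,
    ← integral_sub (hint _ (by fun_prop)) (hint _ (by fun_prop)), mulVec_transpose,
    ← intervalIntegral_vecMul_const ((by fun_prop : ContinuousOn _ (Icc a r)).mono huIcc)]
  refine integral_congr fun s hs => ?_
  rw [hx s (huIcc hs), mulVec_add, add_sub_cancel_right, ← vecMul_vecMul, vecMul_transpose,
    mulVec_transpose]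

end Matrix

theorem stmt_19_general (n k : ℕ) (r : ℝ) (hr : 0 < r)
    (A : ℝ → Matrix (Fin n) (Fin n) ℝ) (b : ℝ → (Fin n → ℝ))
    (C : ℝ → Matrix (Fin n) (Fin k) ℝ) (f : ℝ → (Fin k → ℝ))
    (hA : ContinuousOn A (Set.Icc 0 r))
    (hC : ContinuousOn C (Set.Icc 0 r)) (hf : ContinuousOn f (Set.Icc 0 r))
    (x : ℝ → (Fin n → ℝ)) (y : ℝ → (Fin k → ℝ))
    (hx : ∀ t ∈ Set.Icc (0:ℝ) r,
      HasDerivWithinAt x (A t *ᵥ x t + b t) (Set.Icc 0 r) t)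
    (hy : ∀ t ∈ Set.Icc (0:ℝ) r,
      HasDerivWithinAt y (f t + (C t)ᵀ *ᵥ x t) (Set.Icc 0 r) t)
    (Φ : ℝ → Matrix (Fin n) (Fin n) ℝ)
    (hΦ : ∀ t ∈ Set.Icc (0:ℝ) r, HasDerivWithinAt Φ (A t * Φ t) (Set.Icc 0 r) t)
    (hΦ0 : Φ 0 = 1)
    (θ : ℝ → (Fin n → ℝ))
    (hθ : ∀ t ∈ Set.Icc (0:ℝ) r,
      HasDerivWithinAt θ (A t *ᵥ θ t + b t) (Set.Icc 0 r) t)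
    (hθ0 : θ 0 = 0)
    (q : ℝ → Matrix (Fin n) (Fin k) ℝ)
    (hqdef : ∀ t, q t = ∫ s in (0:ℝ)..t, (Φ s)ᵀ * C s)
    (p : ℝ → (Fin k → ℝ))
    (hpdef : ∀ t, p t = y t - y 0 - (∫ s in (0:ℝ)..t, f s)
      - ∫ s in (0:ℝ)..t, (C s)ᵀ *ᵥ θ s)
    (Q : Matrix (Fin n) (Fin n) ℝ) (hQ : Q = ∫ t in (0:ℝ)..r, q t * (q t)ᵀ)
    (hQpd : Q.PosDef) :
    x r = Φ r *ᵥ (Q⁻¹ *ᵥ ∫ t in (0:ℝ)..r, q t *ᵥ p t) + θ r := by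
  have hsol : ∀ t ∈ Icc 0 r, x t = Φ t *ᵥ x 0 + θ t := fun t ht => by
    have := eqOn_mulVec_of_hasDerivWithinAt_fundamental hA hΦ hΦ0 (z := x - θ)
      (fun s hs => by simpa [mulVec_sub] using (hx s hs).sub (hθ s hs)) ht
    simpa [hθ0, sub_eq_iff_eq_add] using this
  have hΦc := HasDerivWithinAt.continuousOn hΦ
  have hp : ∀ t ∈ Icc 0 r, p t = (q t)ᵀ *ᵥ x 0 := fun t ht => by
    rw [hpdef, hqdef]
    exact output_increment_eq_transpose_mulVec hC hf hΦc (HasDerivWithinAt.continuousOn hθ)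
      hsol hy ht
  have hq : ContinuousOn q (uIcc 0 r) := by
    have hΦC : ContinuousOn (fun s => (Φ s)ᵀ * C s) (uIcc 0 r) := by
      rw [uIcc_of_le hr.le]; fun_prop
    rw [funext hqdef]
    exact continuousOn_primitive_interval (hΦC.integrableOn_uIcc (μ := volume))
  have hpq : ∫ t in 0..r, q t *ᵥ p t = Q *ᵥ x 0 := by
    rw [hQ, ← intervalIntegral_mulVec_const (by fun_prop)]
    refine integral_congr fun t ht => ?_
    rw [hp t (uIcc_of_le hr.le ▸ ht), mulVec_mulVec]
  rw [hpq, mulVec_mulVec (x 0) Q⁻¹, nonsing_inv_mul Q ((isUnit_iff_isUnit_det Q).1 hQpd.isUnit),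
    one_mulVec, hsol r ⟨hr.le, le_rfl⟩]

/-- Dead-beat reconstruction formula (2.23)–(2.24), the core of Corollaries
2.9 and 2.11: if `Q = ∫ t in 0..r, q t * (q t)ᵀ` is positive definite, then
the state at time `r` is recovered exactly from the output history and the
input data by the observer operator `P`:
`x r = Φ r *ᵥ (Q⁻¹ *ᵥ ∫ t in 0..r, q t *ᵥ p t) + θ r`. -/
theorem stmt_19 (n k : ℕ) (hn : 1 ≤ n) (hk : 1 ≤ k) (r : ℝ) (hr : 0 < r)
    (A : ℝ → Matrix (Fin n) (Fin n) ℝ) (b : ℝ → (Fin n → ℝ))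
    (C : ℝ → Matrix (Fin n) (Fin k) ℝ) (f : ℝ → (Fin k → ℝ))
    (hA : ContinuousOn A (Set.Icc 0 r)) (hb : ContinuousOn b (Set.Icc 0 r))
    (hC : ContinuousOn C (Set.Icc 0 r)) (hf : ContinuousOn f (Set.Icc 0 r))
    (x : ℝ → (Fin n → ℝ)) (y : ℝ → (Fin k → ℝ)) (x₀ : Fin n → ℝ)
    (hx : ∀ t ∈ Set.Icc (0:ℝ) r,
      HasDerivWithinAt x (A t *ᵥ x t + b t) (Set.Icc 0 r) t)
    (hy : ∀ t ∈ Set.Icc (0:ℝ) r,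
      HasDerivWithinAt y (f t + (C t)ᵀ *ᵥ x t) (Set.Icc 0 r) t)
    (hx0 : x 0 = x₀)
    (Φ : ℝ → Matrix (Fin n) (Fin n) ℝ)
    (hΦ : ∀ t ∈ Set.Icc (0:ℝ) r, HasDerivWithinAt Φ (A t * Φ t) (Set.Icc 0 r) t)
    (hΦ0 : Φ 0 = 1)
    (θ : ℝ → (Fin n → ℝ))
    (hθ : ∀ t ∈ Set.Icc (0:ℝ) r,
      HasDerivWithinAt θ (A t *ᵥ θ t + b t) (Set.Icc 0 r) t)
    (hθ0 : θ 0 = 0)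
    (q : ℝ → Matrix (Fin n) (Fin k) ℝ)
    (hqdef : ∀ t, q t = ∫ s in (0:ℝ)..t, (Φ s)ᵀ * C s)
    (p : ℝ → (Fin k → ℝ))
    (hpdef : ∀ t, p t = y t - y 0 - (∫ s in (0:ℝ)..t, f s)
      - ∫ s in (0:ℝ)..t, (C s)ᵀ *ᵥ θ s)
    (Q : Matrix (Fin n) (Fin n) ℝ) (hQ : Q = ∫ t in (0:ℝ)..r, q t * (q t)ᵀ)
    (hQpd : Q.PosDef) :
    x r = Φ r *ᵥ (Q⁻¹ *ᵥ ∫ t in (0:ℝ)..r, q t *ᵥ p t) + θ r :=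
  stmt_19_general n k r hr A b C f hA hC hf x y hx hy Φ hΦ hΦ0 θ hθ hθ0 q hqdef p hpdef Q hQ hQpd
end
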